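/- There exists a universal constant k > 0 with the following property. Let ν be a probability measure on 𝕋, U₁(x) := ∫ d(x,y) ν(dy), and μ_β the Gibbs measure with density exp(−βU₁)/Z_β with respect to λ. For every s > 0 and β ≥ 1 with βs ≤ 1, every y ∈ 𝕋 and every f ∈ C¹(𝕋), setting g_y(z) := f(z)·σ(z,y) for z ∉ {y, y+π} and, for x ∈ B(y, π−s) with x ≠ y, x_s := x − s·σ(x,y), one has ∫_{B(y,π−s)} [ exp(β(U₁(x) − U₁(x_s))) g_y(x_s) − g_y(x) ]² μ_β(dx) ≤ k s² β² ( ∫_𝕋 (f')² dμ_β + ∫_𝕋 f² dμ_β ). -/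

import Mathlib

open MeasureTheory Real Set Filter

noncomputable section

instance : Fact (0 < 2 * π) := ⟨Real.two_pi_pos⟩

/-- The circle `𝕋 = ℝ/(2πℤ)`. -/
abbrev 𝕋 : Type := AddCircle (2 * π)

/-- The normalized Haar probability measure `λ` on the circle. -/
def lam : Measure 𝕋 := (ENNReal.ofReal (2 * π))⁻¹ • volume

/-- The representative of a point of the circle in `(-π, π]`. -/
def rep (z : 𝕋) : ℝ := ((AddCircle.equivIoc (2 * π) (-π) z : Set.Ioc (-π) (-π + 2 * π)) : ℝ)

/-- `σ(x,y) = +1` if the representative of `y - x` lies in `[0, π]`, `-1` otherwise. -/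
def sgn (x y : 𝕋) : ℝ := if 0 ≤ rep (y - x) then 1 else -1

/-- The potential `U₁(x) = ∫ d(x,y) ν(dy)`. -/
def U1 (ν : Measure 𝕋) (x : 𝕋) : ℝ := ∫ y, dist x y ∂ν

/-- The normalizing constant `Z_β = ∫ exp(-β U₁) dλ`. -/
def Z1 (ν : Measure 𝕋) (β : ℝ) : ℝ := ∫ x, Real.exp (-β * U1 ν x) ∂lam

/-- The Gibbs measure `μ_β` with density `exp(-β U₁)/Z_β` w.r.t. `λ`. -/
def gibbs1 (ν : Measure 𝕋) (β : ℝ) : Measure 𝕋 :=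
  lam.withDensity fun x => ENNReal.ofReal (Real.exp (-β * U1 ν x) / Z1 ν β)

/-!
On `B(y, π - s)` the point `x_s = x - s σ(x,y)` lies on the same side of `y` as `x`, so the signs
cancel and the integrand is `(E f(x_s) - f(x))²` with `E = exp (β (U₁ x - U₁ x_s))`. Since `U₁` is
`1`-Lipschitz and `d(x, x_s) ≤ s ≤ 1/β`, we have `|E - 1| ≤ 2βs`, so the integrand is at most
`8 β² s² f(x_s)² + 2 (f(x_s) - f(x))²`, and by the fundamental theorem of calculus and
Cauchy–Schwarz `(f(x_s) - f(x))² ≤ s ∫₀ˢ f'(x_t)² dt`. Translating by at most `s` changes the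
Gibbs density by a factor at most `exp (β s) ≤ e`, so `∫ h(x_t) dμ_β ≤ 2e ∫ h dμ_β` for `h ≥ 0` and
`0 ≤ t ≤ s`; integrating over `t` (Fubini) gives the estimate with `k = 16 e`.
-/

open scoped ENNReal

lemma sq_setIntegral_le_measureReal_mul {α : Type*} [MeasurableSpace α] {μ : Measure α}
    {t : Set α} (ht : μ t ≠ ∞) {h : α → ℝ} (hi : IntegrableOn h t μ)
    (hi2 : IntegrableOn (fun x => h x ^ 2) t μ) :
    (∫ x in t, h x ∂μ) ^ 2 ≤ μ.real t * ∫ x in t, h x ^ 2 ∂μ := by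
  rcases eq_or_ne (μ t) 0 with h0 | h0
  · simp [Measure.restrict_eq_zero.mpr h0]
  have hpos : 0 < μ.real t := ENNReal.toReal_pos h0 ht
  have hJensen := (even_two.convexOn_pow (𝕜 := ℝ)).map_set_average_le
    (continuous_pow 2).continuousOn isClosed_univ h0 ht (ae_of_all _ fun _ => mem_univ _) hi hi2
  simp only [setAverage_eq, smul_eq_mul, mul_pow] at hJensen
  calc (∫ x in t, h x ∂μ) ^ 2 = μ.real t ^ 2 * ((μ.real t)⁻¹ ^ 2 * (∫ x in t, h x ∂μ) ^ 2) := by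
        field_simp
    _ ≤ μ.real t ^ 2 * ((μ.real t)⁻¹ * ∫ x in t, h x ^ 2 ∂μ) := by gcongr
    _ = μ.real t * ∫ x in t, h x ^ 2 ∂μ := by field_simp

lemma sq_sub_le_mul_integral_sq_of_hasDerivAt {g g' : ℝ → ℝ} (hg : ∀ t, HasDerivAt g (g' t) t)
    (hg' : Continuous g') {s : ℝ} (hs : 0 ≤ s) :
    (g s - g 0) ^ 2 ≤ s * ∫ t in Ioc 0 s, g' t ^ 2 := by
  have hFTC : g s - g 0 = ∫ t in Ioc 0 s, g' t := by
    rw [← intervalIntegral.integral_of_le hs,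
      intervalIntegral.integral_eq_sub_of_hasDerivAt (fun t _ => hg t)
        (hg'.intervalIntegrable _ _)]
  have hvol : volume.real (Ioc 0 s) = s := by simp [hs]
  have hCS := sq_setIntegral_le_measureReal_mul (t := Ioc 0 s) measure_Ioc_lt_top.ne
    (hg'.integrableOn_Ioc (μ := volume)) ((hg'.pow 2).integrableOn_Ioc (μ := volume))
  rwa [hvol, ← hFTC] at hCS

lemma integral_le_of_lintegral_ofReal_le {α : Type*} [MeasurableSpace α] {μ : Measure α}
    {H : α → ℝ} (hH : ∀ x, 0 ≤ H x) {c : ℝ} (hc : 0 ≤ c)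
    (h : ∫⁻ x, ENNReal.ofReal (H x) ∂μ ≤ ENNReal.ofReal c) : ∫ x, H x ∂μ ≤ c := by
  refine (le_abs_self _).trans ((norm_integral_le_lintegral_norm H).trans
    (ENNReal.toReal_le_of_le_ofReal hc ?_))
  simpa only [Real.norm_of_nonneg (hH _)] using h

lemma Function.Periodic.deriv {f : ℝ → ℝ} {c : ℝ} (hper : Function.Periodic f c) :
    Function.Periodic (deriv f) c := fun x => by
  rw [← deriv_comp_add_const, funext hper]

lemma rep_mem_Ioc (z : 𝕋) : rep z ∈ Ioc (-π) π := by
  have h : rep z ∈ Ioc (-π) (-π + 2 * π) := (AddCircle.equivIoc (2 * π) (-π) z).property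
  exact ⟨h.1, by linarith [h.2]⟩

lemma coe_rep (z : 𝕋) : ((rep z : ℝ) : 𝕋) = z :=
  (AddCircle.equivIoc (2 * π) (-π)).symm_apply_apply z

lemma rep_coe {u : ℝ} (hu : u ∈ Ioc (-π) π) : rep (u : 𝕋) = u :=
  congrArg Subtype.val (AddCircle.equivIoc_coe_eq ⟨hu.1, by linarith [hu.2]⟩)

lemma abs_rep_sub_eq_dist (x y : 𝕋) : |rep (y - x)| = dist x y := by
  have h := rep_mem_Ioc (y - x)
  have hnorm : ‖((rep (y - x) : ℝ) : 𝕋)‖ = |rep (y - x)| := by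
    rw [AddCircle.norm_coe_eq_abs_iff _ Real.two_pi_pos.ne', abs_of_pos Real.two_pi_pos, abs_le]
    constructor <;> linarith [h.1, h.2]
  rw [← hnorm, coe_rep, dist_comm, dist_eq_norm]

lemma dist_add_coe_le (x : 𝕋) (c : ℝ) : dist x (x + (c : 𝕋)) ≤ |c| := by
  rw [dist_eq_norm, sub_add_cancel_left, ← AddCircle.coe_neg, ← abs_neg, ← Real.norm_eq_abs]
  exact QuotientAddGroup.norm_mk_le_norm

lemma measurable_rep : Measurable rep :=
  measurable_subtype_coe.comp (AddCircle.measurableEquivIoc (2 * π) (-π)).measurable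

lemma continuous_comp_rep {f : ℝ → ℝ} (hf : Continuous f) (hper : Function.Periodic f (2 * π)) :
    Continuous fun z => f (rep z) :=
  AddCircle.liftIoc_continuous (hper (-π)).symm hf.continuousOn

lemma Function.Periodic.comp_rep_add {f : ℝ → ℝ} (hper : Function.Periodic f (2 * π))
    (x : 𝕋) (c : ℝ) : f (rep (x + (c : 𝕋))) = f (rep x + c) := by
  have key : ∀ z : ℝ, f (rep (z : 𝕋)) = f z := fun z => by
    simpa only [coe_rep, hper.lift_coe] using (hper.lift_coe (rep (z : 𝕋))).symm
  rw [← coe_rep x, ← AddCircle.coe_add, key, coe_rep]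

lemma sgn_eq_one_or_eq_neg_one (x y : 𝕋) : sgn x y = 1 ∨ sgn x y = -1 := by
  unfold sgn; split_ifs <;> simp

lemma abs_sgn (x y : 𝕋) : |sgn x y| = 1 := by
  rcases sgn_eq_one_or_eq_neg_one x y with h | h <;> simp [h]

lemma sgn_sq (x y : 𝕋) : sgn x y ^ 2 = 1 := by
  rw [← sq_abs, abs_sgn, one_pow]

lemma measurable_sgn (y : 𝕋) : Measurable fun x => sgn x y :=
  Measurable.ite (measurableSet_le measurable_const
    (measurable_rep.comp (measurable_const.sub measurable_id))) measurable_const measurable_const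

lemma integrable_sq_comp_rep {μ : Measure 𝕋} [IsFiniteMeasure μ] {f : ℝ → ℝ} (hf : Continuous f)
    (hper : Function.Periodic f (2 * π)) : Integrable (fun z => f (rep z) ^ 2) μ :=
  ((continuous_comp_rep hf hper).pow 2).integrable_of_hasCompactSupport
    (HasCompactSupport.of_compactSpace _)

/-- The point `x_s` of the paper. -/
def shiftAway (y : 𝕋) (s : ℝ) (x : 𝕋) : 𝕋 := x + ((-(s * sgn x y) : ℝ) : 𝕋)

lemma dist_shiftAway_le (y : 𝕋) (s : ℝ) (x : 𝕋) : dist x (shiftAway y s x) ≤ |s| := by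
  simpa only [shiftAway, abs_neg, abs_mul, abs_sgn, mul_one] using
    dist_add_coe_le x (-(s * sgn x y))

lemma Function.Periodic.comp_rep_shiftAway {f : ℝ → ℝ} (hper : Function.Periodic f (2 * π))
    (y : 𝕋) (s : ℝ) (x : 𝕋) : f (rep (shiftAway y s x)) = f (rep x - s * sgn x y) :=
  hper.comp_rep_add x _

lemma measurable_shiftAway_uncurry (y : 𝕋) :
    Measurable fun p : 𝕋 × ℝ => shiftAway y p.2 p.1 :=
  measurable_fst.add (AddCircle.measurable_mk'.comp
    (measurable_snd.mul ((measurable_sgn y).comp measurable_fst)).neg)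

lemma sgn_shiftAway {y x : 𝕋} {s : ℝ} (hs : 0 ≤ s) (hx : x ∈ Metric.ball y (π - s)) :
    sgn (shiftAway y s x) y = sgn x y := by
  set r := rep (y - x) with hr
  have hdist : |r| < π - s := (abs_rep_sub_eq_dist x y).trans_lt hx
  have hsub : y - shiftAway y s x = ((r + s * sgn x y : ℝ) : 𝕋) := by
    rw [shiftAway, AddCircle.coe_add, hr, coe_rep, AddCircle.coe_neg]; abel
  obtain ⟨hr₁, hr₂⟩ := abs_lt.mp hdist
  by_cases h : 0 ≤ r
  · have hσ : sgn x y = 1 := if_pos h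
    rw [sgn, hsub, hσ, rep_coe ⟨by linarith, by linarith⟩, if_pos (by linarith)]
  · have hσ : sgn x y = -1 := if_neg h
    rw [sgn, hsub, hσ, rep_coe ⟨by linarith, by linarith⟩, if_neg (by linarith)]

lemma sq_sub_comp_shiftAway_le {f : ℝ → ℝ} (hf : ContDiff ℝ 1 f)
    (hper : Function.Periodic f (2 * π)) (y : 𝕋) {s : ℝ} (hs : 0 ≤ s) (x : 𝕋) :
    ENNReal.ofReal ((f (rep (shiftAway y s x)) - f (rep x)) ^ 2) ≤
      ENNReal.ofReal s *
        ∫⁻ t in Ioc 0 s, ENNReal.ofReal (deriv f (rep (shiftAway y t x)) ^ 2) := by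
  simp only [hper.comp_rep_shiftAway, hper.deriv.comp_rep_shiftAway]
  set σ := sgn x y
  have hline : Continuous fun t : ℝ => rep x - t * σ := by fun_prop
  have hderiv : ∀ t, HasDerivAt (fun u => f (rep x - u * σ))
      (deriv f (rep x - t * σ) * -σ) t := fun t =>
    (hf.differentiable one_ne_zero _).hasDerivAt.comp t
      (by simpa using ((hasDerivAt_id t).mul_const σ).const_sub (rep x))
  have hcont : Continuous fun t => deriv f (rep x - t * σ) :=
    (hf.continuous_deriv le_rfl).comp hline
  have hcont2 : Continuous fun t => deriv f (rep x - t * σ) ^ 2 := hcont.pow 2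
  have hsq : ∀ t, (deriv f (rep x - t * σ) * -σ) ^ 2 = deriv f (rep x - t * σ) ^ 2 := fun t => by
    rw [mul_pow, neg_sq, sgn_sq, mul_one]
  have hFTC := sq_sub_le_mul_integral_sq_of_hasDerivAt hderiv (hcont.mul continuous_const) hs
  simp only [hsq, zero_mul, sub_zero] at hFTC
  rw [← ofReal_integral_eq_lintegral_ofReal hcont2.integrableOn_Ioc
    (ae_of_all _ fun _ => sq_nonneg _), ← ENNReal.ofReal_mul hs]
  exact ENNReal.ofReal_le_ofReal hFTC

lemma lipschitzWith_one_U1 (ν : Measure 𝕋) [IsProbabilityMeasure ν] : LipschitzWith 1 (U1 ν) := by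
  have hint : ∀ x : 𝕋, Integrable (fun y => dist x y) ν := fun x =>
    (continuous_const.dist continuous_id).integrable_of_hasCompactSupport
      (HasCompactSupport.of_compactSpace _)
  refine LipschitzWith.of_dist_le_mul fun x z => ?_
  rw [NNReal.coe_one, one_mul, Real.dist_eq, U1, U1, ← integral_sub (hint x) (hint z)]
  calc |∫ y, (dist x y - dist z y) ∂ν| ≤ ∫ y, |dist x y - dist z y| ∂ν :=
        abs_integral_le_integral_abs
    _ ≤ ∫ _, dist x z ∂ν :=
        integral_mono ((hint x).sub (hint z)).abs (integrable_const _)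
          fun y => abs_dist_sub_le x z y
    _ = dist x z := by simp

instance : IsProbabilityMeasure lam := by
  constructor
  rw [lam, Measure.smul_apply, AddCircle.measure_univ, smul_eq_mul]
  exact ENNReal.inv_mul_cancel (ENNReal.ofReal_pos.mpr Real.two_pi_pos).ne' ENNReal.ofReal_ne_top

instance : lam.IsAddRightInvariant := by unfold lam; infer_instance

section Gibbs

variable (ν : Measure 𝕋) {β : ℝ}

lemma Z1_nonneg : 0 ≤ Z1 ν β := integral_nonneg fun _ => (exp_pos _).le

lemma isFiniteMeasure_gibbs1 (hβ : 0 ≤ β) : IsFiniteMeasure (gibbs1 ν β) := by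
  refine isFiniteMeasure_withDensity_ofReal (HasFiniteIntegral.of_bounded (C := 1 / Z1 ν β)
    (ae_of_all _ fun x => ?_))
  have hZ := Z1_nonneg ν (β := β)
  have hU : 0 ≤ U1 ν x := integral_nonneg fun _ => dist_nonneg
  rw [Real.norm_of_nonneg (by positivity)]
  exact div_le_div_of_nonneg_right (exp_le_one_iff.mpr (by nlinarith)) hZ

instance : SFinite (gibbs1 ν β) := by unfold gibbs1; infer_instance

variable [IsProbabilityMeasure ν]

lemma lintegral_comp_add_coe_le (hβ : 0 ≤ β) {G : 𝕋 → ℝ≥0∞} (hG : Measurable G) (c : ℝ) :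
    ∫⁻ x, G (x + (c : 𝕋)) ∂gibbs1 ν β ≤
      ENNReal.ofReal (exp (β * |c|)) * ∫⁻ x, G x ∂gibbs1 ν β := by
  set ρ : 𝕋 → ℝ≥0∞ := fun x => ENNReal.ofReal (exp (-β * U1 ν x) / Z1 ν β)
  have hρ : Measurable ρ := ENNReal.measurable_ofReal.comp
    ((Real.measurable_exp.comp
      ((lipschitzWith_one_U1 ν).continuous.measurable.const_mul (-β))).div_const _)
  have hρc : ∀ x, ρ x ≤ ENNReal.ofReal (exp (β * |c|)) * ρ (x + (c : 𝕋)) := fun x => by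
    have hU : U1 ν (x + (c : 𝕋)) - U1 ν x ≤ |c| :=
      (le_abs_self _).trans <| ((lipschitzWith_one_U1 ν).dist_le_mul _ _).trans <| by
        rw [NNReal.coe_one, one_mul, dist_comm]; exact dist_add_coe_le x c
    rw [← ENNReal.ofReal_mul (exp_pos _).le, ← mul_div_assoc, ← Real.exp_add]
    exact ENNReal.ofReal_le_ofReal
      (div_le_div_of_nonneg_right (exp_le_exp.mpr (by nlinarith)) (Z1_nonneg ν))
  have hGc : Measurable fun x => G (x + (c : 𝕋)) := hG.comp (measurable_add_const _)
  change ∫⁻ x, G (x + (c : 𝕋)) ∂lam.withDensity ρ ≤ _ * ∫⁻ x, G x ∂lam.withDensity ρ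
  rw [lintegral_withDensity_eq_lintegral_mul _ hρ hGc,
    lintegral_withDensity_eq_lintegral_mul _ hρ hG, ← lintegral_const_mul _ (hρ.mul hG)]
  calc ∫⁻ x, ρ x * G (x + (c : 𝕋)) ∂lam
      ≤ ∫⁻ x, ENNReal.ofReal (exp (β * |c|)) * (ρ (x + (c : 𝕋)) * G (x + (c : 𝕋))) ∂lam :=
        lintegral_mono fun x => by rw [← mul_assoc]; gcongr; exact hρc x
    _ = _ := lintegral_add_right_eq_self
        (fun x => ENNReal.ofReal (exp (β * |c|)) * (ρ x * G x)) (c : 𝕋)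

lemma lintegral_comp_shiftAway_le (hβ : 0 ≤ β) {G : 𝕋 → ℝ≥0∞} (hG : Measurable G) (y : 𝕋)
    (t : ℝ) :
    ∫⁻ x, G (shiftAway y t x) ∂gibbs1 ν β ≤
      ENNReal.ofReal (2 * exp (β * |t|)) * ∫⁻ x, G x ∂gibbs1 ν β := by
  have hsplit : ∀ x, G (shiftAway y t x) ≤ G (x + ((-t : ℝ) : 𝕋)) + G (x + (t : 𝕋)) := fun x => by
    rcases sgn_eq_one_or_eq_neg_one x y with h | h <;> simp [shiftAway, h]
  calc ∫⁻ x, G (shiftAway y t x) ∂gibbs1 ν β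
      ≤ ∫⁻ x, G (x + ((-t : ℝ) : 𝕋)) ∂gibbs1 ν β + ∫⁻ x, G (x + (t : 𝕋)) ∂gibbs1 ν β :=
        (lintegral_mono hsplit).trans_eq
          (lintegral_add_left (hG.comp (measurable_add_const _)) _)
    _ ≤ _ := by
        grw [lintegral_comp_add_coe_le ν hβ hG, lintegral_comp_add_coe_le ν hβ hG, abs_neg,
          ← add_mul, ← ENNReal.ofReal_add (exp_pos _).le (exp_pos _).le, ← two_mul]

lemma lintegral_sq_sub_comp_shiftAway_le (hβ : 0 ≤ β) {f : ℝ → ℝ} (hf : ContDiff ℝ 1 f)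
    (hper : Function.Periodic f (2 * π)) (y : 𝕋) {s : ℝ} (hs : 0 ≤ s) :
    ∫⁻ x, ENNReal.ofReal ((f (rep (shiftAway y s x)) - f (rep x)) ^ 2) ∂gibbs1 ν β ≤
      ENNReal.ofReal (2 * s ^ 2 * exp (β * s)) *
        ∫⁻ x, ENNReal.ofReal (deriv f (rep x) ^ 2) ∂gibbs1 ν β := by
  set G : 𝕋 → ℝ≥0∞ := fun z => ENNReal.ofReal (deriv f (rep z) ^ 2)
  have hG : Measurable G := ENNReal.measurable_ofReal.comp
    (((hf.continuous_deriv le_rfl).measurable.comp measurable_rep).pow_const 2)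
  have hq : Measurable (Function.uncurry fun x t => G (shiftAway y t x)) :=
    hG.comp (measurable_shiftAway_uncurry y)
  calc ∫⁻ x, ENNReal.ofReal ((f (rep (shiftAway y s x)) - f (rep x)) ^ 2) ∂gibbs1 ν β
      ≤ ∫⁻ x, ENNReal.ofReal s * (∫⁻ t in Ioc 0 s, G (shiftAway y t x)) ∂gibbs1 ν β :=
        lintegral_mono fun x => sq_sub_comp_shiftAway_le hf hper y hs x
    _ = ENNReal.ofReal s * ∫⁻ t in Ioc 0 s, ∫⁻ x, G (shiftAway y t x) ∂gibbs1 ν β := by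
        rw [lintegral_const_mul _ hq.lintegral_prod_right,
          lintegral_lintegral_swap hq.aemeasurable]
    _ ≤ ENNReal.ofReal s * ∫⁻ t in Ioc 0 s,
          ENNReal.ofReal (2 * exp (β * s)) * ∫⁻ x, G x ∂gibbs1 ν β := by
        gcongr ENNReal.ofReal s * ?_
        refine setLIntegral_mono' measurableSet_Ioc fun t ht => ?_
        refine (lintegral_comp_shiftAway_le ν hβ hG y t).trans ?_
        gcongr
        rw [abs_of_pos ht.1]
        exact ht.2
    _ = _ := by
        rw [setLIntegral_const, Real.volume_Ioc, sub_zero, mul_comm _ (ENNReal.ofReal s),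
          ← mul_assoc, ← mul_assoc, ← ENNReal.ofReal_mul hs, ← ENNReal.ofReal_mul (by positivity)]
        ring_nf

lemma sq_adjoint_sub_le (hβ : 0 ≤ β) {s : ℝ} (hs : 0 ≤ s) (hβs : β * s ≤ 1) {y x : 𝕋}
    (hx : x ∈ Metric.ball y (π - s)) (F : 𝕋 → ℝ) :
    (exp (β * (U1 ν x - U1 ν (shiftAway y s x))) *
        (F (shiftAway y s x) * sgn (shiftAway y s x) y) - F x * sgn x y) ^ 2 ≤
      8 * β ^ 2 * s ^ 2 * F (shiftAway y s x) ^ 2 + 2 * (F (shiftAway y s x) - F x) ^ 2 := by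
  set E := exp (β * (U1 ν x - U1 ν (shiftAway y s x)))
  set a := F (shiftAway y s x)
  have hU : |β * (U1 ν x - U1 ν (shiftAway y s x))| ≤ β * s := by
    rw [abs_mul, abs_of_nonneg hβ]
    gcongr
    calc |U1 ν x - U1 ν (shiftAway y s x)| ≤ dist x (shiftAway y s x) := by
          simpa [Real.dist_eq] using (lipschitzWith_one_U1 ν).dist_le_mul x (shiftAway y s x)
      _ ≤ s := (dist_shiftAway_le y s x).trans_eq (abs_of_nonneg hs)
  have hE : |E - 1| ≤ 2 * (β * s) := (abs_exp_sub_one_le (hU.trans hβs)).trans (by linarith)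
  have hE2 : (E - 1) ^ 2 ≤ 4 * β ^ 2 * s ^ 2 := by nlinarith [sq_abs (E - 1), abs_nonneg (E - 1)]
  rw [sgn_shiftAway hs hx, show E * (a * sgn x y) - F x * sgn x y = sgn x y * (E * a - F x) by ring,
    mul_pow, sgn_sq, one_mul]
  nlinarith [sq_nonneg ((E - 1) * a - (a - F x)), mul_le_mul_of_nonneg_right hE2 (sq_nonneg a)]

lemma setLIntegral_ball_sq_adjoint_sub_le (hβ : 1 ≤ β) {s : ℝ} (hs : 0 < s) (hβs : β * s ≤ 1)
    {f : ℝ → ℝ} (hf : ContDiff ℝ 1 f) (hper : Function.Periodic f (2 * π)) (y : 𝕋) :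
    ∫⁻ x in Metric.ball y (π - s), ENNReal.ofReal ((exp (β * (U1 ν x - U1 ν (shiftAway y s x))) *
        (f (rep (shiftAway y s x)) * sgn (shiftAway y s x) y) - f (rep x) * sgn x y) ^ 2)
        ∂gibbs1 ν β ≤
      ENNReal.ofReal (16 * exp 1 * s ^ 2 * β ^ 2) *
        (∫⁻ x, ENNReal.ofReal (deriv f (rep x) ^ 2) ∂gibbs1 ν β +
          ∫⁻ x, ENNReal.ofReal (f (rep x) ^ 2) ∂gibbs1 ν β) := by
  have hβ0 : 0 ≤ β := by linarith
  have hexp : exp (β * s) ≤ exp 1 := exp_le_exp.mpr hβs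
  set A : 𝕋 → ℝ≥0∞ := fun z => ENNReal.ofReal (f (rep z) ^ 2)
  have hA : Measurable A := ENNReal.measurable_ofReal.comp
    ((hf.continuous.measurable.comp measurable_rep).pow_const 2)
  have hAs : Measurable fun x => A (shiftAway y s x) :=
    hA.comp ((measurable_shiftAway_uncurry y).comp (measurable_id.prodMk measurable_const))
  calc _ ≤ ∫⁻ x, (ENNReal.ofReal (8 * β ^ 2 * s ^ 2) * A (shiftAway y s x) +
          2 * ENNReal.ofReal ((f (rep (shiftAway y s x)) - f (rep x)) ^ 2)) ∂gibbs1 ν β := by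
        refine (setLIntegral_mono' measurableSet_ball fun x hx => ?_).trans
          (setLIntegral_le_lintegral _ _)
        rw [show (2 : ℝ≥0∞) = ENNReal.ofReal 2 by norm_num, ← ENNReal.ofReal_mul (by positivity),
          ← ENNReal.ofReal_mul (by positivity),
          ← ENNReal.ofReal_add (by positivity) (by positivity)]
        exact ENNReal.ofReal_le_ofReal (sq_adjoint_sub_le ν hβ0 hs.le hβs hx fun z => f (rep z))
    _ = ENNReal.ofReal (8 * β ^ 2 * s ^ 2) * ∫⁻ x, A (shiftAway y s x) ∂gibbs1 ν β +
          2 * ∫⁻ x, ENNReal.ofReal ((f (rep (shiftAway y s x)) - f (rep x)) ^ 2) ∂gibbs1 ν β := by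
        rw [lintegral_add_left (hAs.const_mul _), lintegral_const_mul _ hAs,
          lintegral_const_mul' _ _ ENNReal.ofNat_ne_top]
    _ ≤ ENNReal.ofReal (8 * β ^ 2 * s ^ 2) *
            (ENNReal.ofReal (2 * exp (β * |s|)) * ∫⁻ x, A x ∂gibbs1 ν β) +
          2 * (ENNReal.ofReal (2 * s ^ 2 * exp (β * s)) *
            ∫⁻ x, ENNReal.ofReal (deriv f (rep x) ^ 2) ∂gibbs1 ν β) := by
        gcongr
        · exact lintegral_comp_shiftAway_le ν hβ0 hA y s
        · exact lintegral_sq_sub_comp_shiftAway_le ν hβ0 hf hper y hs.le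
    _ ≤ ENNReal.ofReal (16 * exp 1 * s ^ 2 * β ^ 2) * ∫⁻ x, A x ∂gibbs1 ν β +
          ENNReal.ofReal (16 * exp 1 * s ^ 2 * β ^ 2) *
            ∫⁻ x, ENNReal.ofReal (deriv f (rep x) ^ 2) ∂gibbs1 ν β := by
        rw [show (2 : ℝ≥0∞) = ENNReal.ofReal 2 by norm_num, ← mul_assoc, ← mul_assoc,
          ← ENNReal.ofReal_mul (by positivity), ← ENNReal.ofReal_mul (by positivity)]
        gcongr ?_ * _ + ?_ * _ <;> apply ENNReal.ofReal_le_ofReal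
        · rw [abs_of_pos hs]
          nlinarith [mul_le_mul_of_nonneg_left hexp (by positivity : 0 ≤ 16 * s ^ 2 * β ^ 2)]
        · have hβ2 : 0 ≤ s ^ 2 * exp 1 * (β ^ 2 - 1) :=
            mul_nonneg (by positivity) (sub_nonneg.mpr (one_le_pow₀ hβ))
          nlinarith [mul_le_mul_of_nonneg_left hexp (by positivity : 0 ≤ 4 * s ^ 2),
            mul_nonneg (sq_nonneg s) (exp_pos 1).le]
    _ = _ := by rw [mul_add, add_comm]

end Gibbs

/-- Lemma `Tstarpa1`: there is a universal constant `k > 0` such that for any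
probability measure `ν` on the circle, any `s > 0`, `β ≥ 1` with `βs ≤ 1`, any `y` and any
`C¹` function `f` on the circle, setting `g_y(z) = f(z)σ(z,y)` and `x_s = x - sσ(x,y)`,
`∫_{B(y,π-s)} (e^{β(U₁(x)-U₁(x_s))} g_y(x_s) - g_y(x))² dμ_β
   ≤ k s² β² (∫ (f')² dμ_β + ∫ f² dμ_β)`. -/
theorem adjoint_operator_L2_estimate_p_one :
    ∃ k : ℝ, 0 < k ∧
      ∀ (ν : Measure 𝕋), IsProbabilityMeasure ν →
      ∀ (s β : ℝ), 0 < s → 1 ≤ β → β * s ≤ 1 →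
      ∀ (y : 𝕋) (f : ℝ → ℝ), Function.Periodic f (2 * π) → ContDiff ℝ 1 f →
      ∀ (xs : 𝕋 → 𝕋), (∀ x, xs x = x + ((-(s * sgn x y) : ℝ) : 𝕋)) →
      ∀ (gy : 𝕋 → ℝ), (∀ z, gy z = f (rep z) * sgn z y) →
        (∫ x in Metric.ball y (π - s),
            (Real.exp (β * (U1 ν x - U1 ν (xs x))) * gy (xs x) - gy x) ^ 2
              ∂(gibbs1 ν β))
          ≤ k * s ^ 2 * β ^ 2 *
              ((∫ x, (deriv f (rep x)) ^ 2 ∂(gibbs1 ν β))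
                + ∫ x, (f (rep x)) ^ 2 ∂(gibbs1 ν β)) := by
  refine ⟨16 * exp 1, by positivity, fun ν _ s β hs hβ hβs y f hper hf xs hxs gy hgy => ?_⟩
  have := isFiniteMeasure_gibbs1 ν (zero_le_one.trans hβ)
  obtain rfl : xs = shiftAway y s := funext hxs
  obtain rfl : gy = fun z => f (rep z) * sgn z y := funext hgy
  have hD := integrable_sq_comp_rep (μ := gibbs1 ν β) (hf.continuous_deriv le_rfl) hper.deriv
  have hF := integrable_sq_comp_rep (μ := gibbs1 ν β) hf.continuous hper
  refine integral_le_of_lintegral_ofReal_le (fun _ => sq_nonneg _) (by positivity) ?_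
  rw [ENNReal.ofReal_mul (by positivity),
    ENNReal.ofReal_add (integral_nonneg fun _ => sq_nonneg _)
      (integral_nonneg fun _ => sq_nonneg _),
    ofReal_integral_eq_lintegral_ofReal hD (ae_of_all _ fun _ => sq_nonneg _),
    ofReal_integral_eq_lintegral_ofReal hF (ae_of_all _ fun _ => sq_nonneg _)]
  exact setLIntegral_ball_sq_adjoint_sub_le ν hβ hs hβs hf hper y
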